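/- arXiv:1907.11417 — 2 statements merged into one kernel-verified Lean document; each statement's English description precedes it below -/
import Mathlib

section
/- For every m ∈ {0} ∪ ℕ, the set of all two-colored partitions p such that for every block B of p and any two legs α, β ∈ B the color distance δ_p(α,β) is a multiple of m, is a category of two-colored partitions. -/
noncomputable section
attribute [local instance] Classical.propDecidable

/-- A two-colored partition: two rows of points colored white (`true`) or black (`false`),
together with a set partition (setoid) of all points into blocks. -/
structure TCP where
  upper : ℕ
  lower : ℕ
  upColor : Fin upper → Bool
  loColor : Fin lower → Bool
  rel : Setoid (Fin upper ⊕ Fin lower)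

namespace TCP

/-- The points of a partition. -/
abbrev Point (p : TCP) := Fin p.upper ⊕ Fin p.lower

/-- Native color of a point. -/
def color (p : TCP) : p.Point → Bool
  | .inl j => p.upColor j
  | .inr i => p.loColor i

/-- Normalized color: inverted on the upper row. -/
def ncolor (p : TCP) : p.Point → Bool
  | .inl j => !(p.upColor j)
  | .inr i => p.loColor i

/-- Sign of a point: `+1` for normalized white, `-1` for normalized black. -/
def sgn (p : TCP) (x : p.Point) : ℤ := if p.ncolor x then 1 else -1

/-- Color sum of a finite set of points. -/
def csum (p : TCP) (S : Finset p.Point) : ℤ := ∑ x ∈ S, p.sgn x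

/-- Total color sum Σ(p). -/
def tsum (p : TCP) : ℤ := p.csum Finset.univ

/-- Total number of points. -/
def size (p : TCP) : ℕ := p.upper + p.lower

/-- Position in the counter-clockwise cyclic order: lower points left to right,
then upper points right to left. -/
def pos (p : TCP) : p.Point → ℕ
  | .inr i => i
  | .inl j => p.lower + (p.upper - 1 - j)

/-- Cyclic position of `y` relative to `x`. -/
def relpos (p : TCP) (x y : p.Point) : ℕ := (p.size + p.pos y - p.pos x) % p.size

/-- Half-open cyclic interval `]x,y]`. -/
def Ioc (p : TCP) (x y : p.Point) : Finset p.Point :=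
  Finset.univ.filter (fun z => 0 < p.relpos x z ∧ p.relpos x z ≤ p.relpos x y)

/-- Open cyclic interval `]x,y[`. -/
def Ioo (p : TCP) (x y : p.Point) : Finset p.Point :=
  Finset.univ.filter (fun z => 0 < p.relpos x z ∧ p.relpos x z < p.relpos x y)

/-- The color distance between two points. -/
def cdist (p : TCP) (x y : p.Point) : ℤ :=
  if x = y then p.tsum
  else if p.ncolor x = p.ncolor y then p.csum (p.Ioc x y)
  else p.csum (p.Ioo x y)

/-- The block of a point. -/
def blockOf (p : TCP) (x : p.Point) : Finset p.Point :=
  Finset.univ.filter (fun y => p.rel.r x y)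

/-- A finite set of points is a block of `p`. -/
def IsBlock (p : TCP) (B : Finset p.Point) : Prop := ∃ x, B = p.blockOf x

/-- `(a,b,c,d)` is ordered in the cyclic order of `p`. -/
def Ordered4 (p : TCP) (a b c d : p.Point) : Prop :=
  0 < p.relpos a b ∧ p.relpos a b < p.relpos a c ∧ p.relpos a c < p.relpos a d

/-- Two sets of points cross each other. -/
def Cross (p : TCP) (B₁ B₂ : Finset p.Point) : Prop :=
  ∃ a ∈ B₁, ∃ b ∈ B₁, ∃ a' ∈ B₂, ∃ b' ∈ B₂, p.Ordered4 a a' b b'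

/-! ### The analyzer -/

/-- Set of block sizes. -/
def Fset (S : Set TCP) : Set ℕ :=
  {n | ∃ p ∈ S, ∃ B : Finset p.Point, p.IsBlock B ∧ B.card = n}

/-- Set of block color sums. -/
def Vset (S : Set TCP) : Set ℤ :=
  {v | ∃ p ∈ S, ∃ B : Finset p.Point, p.IsBlock B ∧ p.csum B = v}

/-- Set of total color sums. -/
def Sset (S : Set TCP) : Set ℤ := {s | ∃ p ∈ S, p.tsum = s}

/-- Set of color distances between cyclically subsequent legs of the same block
having the same normalized color. -/
def Lset (S : Set TCP) : Set ℤ :=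
  {d | ∃ p ∈ S, ∃ B : Finset p.Point, p.IsBlock B ∧ ∃ a ∈ B, ∃ b ∈ B, a ≠ b ∧
        p.Ioo a b ∩ B = ∅ ∧ p.ncolor a = p.ncolor b ∧ p.cdist a b = d}

/-- Set of color distances between cyclically subsequent legs of the same block
having different normalized colors. -/
def Kset (S : Set TCP) : Set ℤ :=
  {d | ∃ p ∈ S, ∃ B : Finset p.Point, p.IsBlock B ∧ ∃ a ∈ B, ∃ b ∈ B, a ≠ b ∧
        p.Ioo a b ∩ B = ∅ ∧ p.ncolor a ≠ p.ncolor b ∧ p.cdist a b = d}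

/-- Set of color distances between legs of two crossing blocks. -/
def Xset (S : Set TCP) : Set ℤ :=
  {d | ∃ p ∈ S, ∃ B₁ B₂ : Finset p.Point, p.IsBlock B₁ ∧ p.IsBlock B₂ ∧ B₁ ≠ B₂ ∧
        p.Cross B₁ B₂ ∧ ∃ a ∈ B₁, ∃ b ∈ B₂, p.cdist a b = d}

/-- The parameter domain. -/
abbrev Param := Set ℕ × Set ℤ × Set ℤ × Set ℤ × Set ℤ × Set ℤ

/-- The analyzer `Z = (F, V, Σ, L, K, X)`. -/
def Z (S : Set TCP) : Param := (Fset S, Vset S, Sset S, Lset S, Kset S, Xset S)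

/-! ### Operations on partitions -/

/-- Componentwise relation on a sum type. -/
def sumRel {α β : Type*} (s : α → α → Prop) (t : β → β → Prop) : α ⊕ β → α ⊕ β → Prop
  | .inl a, .inl b => s a b
  | .inr a, .inr b => t a b
  | _, _ => False

/-- Componentwise setoid on a sum type. -/
def sumSetoid {α β : Type*} (s : Setoid α) (t : Setoid β) : Setoid (α ⊕ β) where
  r := sumRel s.r t.r
  iseqv := by
    refine ⟨?_, ?_, ?_⟩
    · rintro (a | a) <;> exact Setoid.refl _
    · rintro (a | a) (b | b) h <;> first | exact Setoid.symm h | exact h.elim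
    · rintro (a | a) (b | b) (c | c) h₁ h₂ <;>
        first | exact Setoid.trans h₁ h₂ | exact h₁.elim | exact h₂.elim

/-- Identification of the points of a tensor product with a sum of points. -/
def ptmap (p q : TCP) :
    (Fin (p.upper + q.upper) ⊕ Fin (p.lower + q.lower)) → (p.Point ⊕ q.Point)
  | .inl j => (finSumFinEquiv.symm j).elim (fun a => .inl (.inl a)) (fun a => .inr (.inl a))
  | .inr i => (finSumFinEquiv.symm i).elim (fun a => .inl (.inr a)) (fun a => .inr (.inr a))

/-- Tensor product: horizontal concatenation. -/
def tensor (p q : TCP) : TCP where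
  upper := p.upper + q.upper
  lower := p.lower + q.lower
  upColor := fun j => (finSumFinEquiv.symm j).elim p.upColor q.upColor
  loColor := fun i => (finSumFinEquiv.symm i).elim p.loColor q.loColor
  rel := Setoid.comap (ptmap p q) (sumSetoid p.rel q.rel)

/-- Embedding of the points of `p` into the points of `p.tensor q`. -/
def tinl (p q : TCP) : p.Point → (p.tensor q).Point
  | .inl j => Sum.inl (Fin.castAdd q.upper j)
  | .inr i => Sum.inr (Fin.castAdd q.lower i)

/-- Embedding of the points of `q` into the points of `p.tensor q`. -/
def tinr (p q : TCP) : q.Point → (p.tensor q).Point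
  | .inl j => Sum.inl (Fin.natAdd p.upper j)
  | .inr i => Sum.inr (Fin.natAdd p.lower i)

/-- Involution: swapping the rows. -/
def invol (p : TCP) : TCP where
  upper := p.lower
  lower := p.upper
  upColor := p.loColor
  loColor := p.upColor
  rel := Setoid.comap Sum.swap p.rel

/-- `(p, q)` is composable: the upper row of `p` matches the lower row of `q`. -/
structure Composable (p q : TCP) : Prop where
  len : p.upper = q.lower
  col : ∀ j : Fin p.upper, p.upColor j = q.loColor (Fin.cast len j)

/-- Generating relation for the composition of `p` and `q`. -/
def compRel (p q : TCP) (h : p.upper = q.lower) :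
    (q.Point ⊕ p.Point) → (q.Point ⊕ p.Point) → Prop := fun x y =>
  (∃ a b, x = .inl a ∧ y = .inl b ∧ q.rel.r a b) ∨
  (∃ a b, x = .inr a ∧ y = .inr b ∧ p.rel.r a b) ∨
  (∃ j : Fin p.upper, x = .inl (.inr (Fin.cast h j)) ∧ y = .inr (.inl j)) ∨
  (∃ j : Fin p.upper, y = .inl (.inr (Fin.cast h j)) ∧ x = .inr (.inl j))

/-- Composition: vertical concatenation, with blocks joined along the middle row. -/
def comp (p q : TCP) (h : Composable p q) : TCP where
  upper := q.upper
  lower := p.lower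
  upColor := q.upColor
  loColor := p.loColor
  rel := Setoid.comap
    (fun x : Fin q.upper ⊕ Fin p.lower => match x with
      | .inl j => Sum.inl (Sum.inl j : q.Point)
      | .inr i => Sum.inr (Sum.inr i : p.Point))
    (Relation.EqvGen.setoid (compRel p q h.len))

/-- The empty partition. -/
def emptyP : TCP := ⟨0, 0, Fin.elim0, Fin.elim0, ⊤⟩

/-- The identity partition of color `c`: one upper and one lower point of color `c`
joined in one block. -/
def idPart (c : Bool) : TCP := ⟨1, 1, fun _ => c, fun _ => c, ⊤⟩

/-- The one-row pair partition with two lower points of colors `c₁`, `c₂` in one block. -/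
def lpair (c₁ c₂ : Bool) : TCP := ⟨0, 2, Fin.elim0, fun i => if i = 0 then c₁ else c₂, ⊤⟩

/-- A category of two-colored partitions. -/
def IsCategory (C : Set TCP) : Prop :=
  emptyP ∈ C ∧ idPart true ∈ C ∧ idPart false ∈ C ∧
  lpair true false ∈ C ∧ lpair false true ∈ C ∧
  (∀ p q, p ∈ C → q ∈ C → p.tensor q ∈ C) ∧
  (∀ p, p ∈ C → p.invol ∈ C) ∧
  (∀ p q (h : Composable p q), p ∈ C → q ∈ C → comp p q h ∈ C)

/-! ### Rotations, verticolor reflection, erasing -/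

/-- Rotate the leftmost upper point down (identity if the upper row is empty). -/
def rotDownL (p : TCP) : TCP :=
  if h : 0 < p.upper then
    { upper := p.upper - 1
      lower := p.lower + 1
      upColor := fun j => p.upColor ⟨j + 1, by have := j.isLt; omega⟩
      loColor := fun i => Fin.cases (!(p.upColor ⟨0, h⟩)) (fun i' => p.loColor i') i
      rel := Setoid.comap
        (fun x : Fin (p.upper - 1) ⊕ Fin (p.lower + 1) => match x with
          | .inl j => (Sum.inl ⟨j + 1, by have := j.isLt; omega⟩ : p.Point)
          | .inr i => Fin.cases (Sum.inl ⟨0, h⟩ : p.Point) (fun i' => (Sum.inr i' : p.Point)) i)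
        p.rel }
  else p

/-- Rotate the rightmost upper point down (identity if the upper row is empty). -/
def rotDownR (p : TCP) : TCP :=
  if h : 0 < p.upper then
    { upper := p.upper - 1
      lower := p.lower + 1
      upColor := fun j => p.upColor ⟨j, by have := j.isLt; omega⟩
      loColor := fun i =>
        Fin.lastCases (!(p.upColor ⟨p.upper - 1, by omega⟩)) (fun i' => p.loColor i') i
      rel := Setoid.comap
        (fun x : Fin (p.upper - 1) ⊕ Fin (p.lower + 1) => match x with
          | .inl j => (Sum.inl ⟨j, by have := j.isLt; omega⟩ : p.Point)
          | .inr i => Fin.lastCases (Sum.inl ⟨p.upper - 1, by omega⟩ : p.Point)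
              (fun i' => (Sum.inr i' : p.Point)) i)
        p.rel }
  else p

/-- Rotate the leftmost lower point up (identity if the lower row is empty). -/
def rotUpL (p : TCP) : TCP :=
  if h : 0 < p.lower then
    { upper := p.upper + 1
      lower := p.lower - 1
      upColor := fun j => Fin.cases (!(p.loColor ⟨0, h⟩)) (fun j' => p.upColor j') j
      loColor := fun i => p.loColor ⟨i + 1, by have := i.isLt; omega⟩
      rel := Setoid.comap
        (fun x : Fin (p.upper + 1) ⊕ Fin (p.lower - 1) => match x with
          | .inl j => Fin.cases (Sum.inr ⟨0, h⟩ : p.Point) (fun j' => (Sum.inl j' : p.Point)) j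
          | .inr i => (Sum.inr ⟨i + 1, by have := i.isLt; omega⟩ : p.Point))
        p.rel }
  else p

/-- Rotate the rightmost lower point up (identity if the lower row is empty). -/
def rotUpR (p : TCP) : TCP :=
  if h : 0 < p.lower then
    { upper := p.upper + 1
      lower := p.lower - 1
      upColor := fun j =>
        Fin.lastCases (!(p.loColor ⟨p.lower - 1, by omega⟩)) (fun j' => p.upColor j') j
      loColor := fun i => p.loColor ⟨i, by have := i.isLt; omega⟩
      rel := Setoid.comap
        (fun x : Fin (p.upper + 1) ⊕ Fin (p.lower - 1) => match x with
          | .inl j => Fin.lastCases (Sum.inr ⟨p.lower - 1, by omega⟩ : p.Point)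
              (fun j' => (Sum.inl j' : p.Point)) j
          | .inr i => (Sum.inr ⟨i, by have := i.isLt; omega⟩ : p.Point))
        p.rel }
  else p

/-- Verticolor reflection: reverse both rows and invert all colors. -/
def vreflect (p : TCP) : TCP where
  upper := p.upper
  lower := p.lower
  upColor := fun j => !(p.upColor j.rev)
  loColor := fun i => !(p.loColor i.rev)
  rel := Setoid.comap (Sum.map Fin.rev Fin.rev) p.rel

/-- `{a, b}` is a turn: two cyclically consecutive points of inverse normalized colors. -/
def IsTurn (p : TCP) (a b : p.Point) : Prop :=
  p.relpos a b = 1 ∧ p.ncolor a ≠ p.ncolor b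

/-- `e` identifies the points of `q` with the points of `p` outside `{a, b}`, preserving
rows, colors and order, and `q` carries the block structure obtained from `p` by erasing
`{a, b}` and merging all blocks meeting `{a, b}`. -/
def IsErasingMap (p : TCP) (a b : p.Point) (q : TCP) (e : q.Point → p.Point) : Prop :=
  Function.Injective e ∧
  Set.range e = {x | x ≠ a ∧ x ≠ b} ∧
  (∀ j : Fin q.upper, ∃ j', e (.inl j) = Sum.inl j') ∧
  (∀ i : Fin q.lower, ∃ i', e (.inr i) = Sum.inr i') ∧
  (∀ j₁ j₂ : Fin q.upper, ∀ j₁' j₂' : Fin p.upper,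
    e (.inl j₁) = Sum.inl j₁' → e (.inl j₂) = Sum.inl j₂' → (j₁ < j₂ ↔ j₁' < j₂')) ∧
  (∀ i₁ i₂ : Fin q.lower, ∀ i₁' i₂' : Fin p.lower,
    e (.inr i₁) = Sum.inr i₁' → e (.inr i₂) = Sum.inr i₂' → (i₁ < i₂ ↔ i₁' < i₂')) ∧
  (∀ x, q.color x = p.color (e x)) ∧
  (∀ x y, q.rel.r x y ↔
    (p.rel.r (e x) (e y) ∨
      ((p.rel.r (e x) a ∨ p.rel.r (e x) b) ∧ (p.rel.r (e y) a ∨ p.rel.r (e y) b))))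

/-- `q` is obtained from `p` by erasing the turn `{a, b}`. -/
def IsErasing (p : TCP) (a b : p.Point) (q : TCP) : Prop :=
  p.IsTurn a b ∧ ∃ e : q.Point → p.Point, IsErasingMap p a b q e

end TCP

/-!
Let `pot x` be the color sum of the points preceding `x` in the cyclic order, cut open at the
leftmost lower point, plus one if `x` is normalized white. Then `δ_p(x, y) ≡ pot y - pot x`
modulo `Σ(p)`, so `p` lies in the set exactly when `m ∣ Σ(p)` and `pot` is constant modulo `m` on
every block. In this form closure is bookkeeping: in `p ⊗ q` the potentials of each factor are
shifted by a constant or by `Σ(q)`; the involution reverses the cyclic order and turns `pot` into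
`pot - Σ(p)`; in a composition, the potentials of `q`, shifted by the difference of the lower-row
color sums, agree with those of `p` at each glued pair of middle points, so `pot` stays constant
modulo `m` along the chains generating the composed blocks.
-/

theorem sum_eq_sum_lt_add_add_sum_gt {α M : Type*} [Fintype α] [AddCommGroup M] {g : α → ℕ}
    (hg : Function.Injective g) (f : α → M) (a : α) :
    ∑ x, f x = (∑ x, if g x < g a then f x else 0) + f a + ∑ x, if g a < g x then f x else 0 := by
  rw [← Finset.sum_ite_eq_of_mem' Finset.univ a f (Finset.mem_univ a), ← Finset.sum_add_distrib,
    ← Finset.sum_add_distrib]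
  refine Finset.sum_congr rfl fun x _ => ?_
  rcases lt_trichotomy (g x) (g a) with h | h | h
  · simp [h, h.not_gt, ne_of_apply_ne g h.ne]
  · simp [hg h]
  · simp [h, h.not_gt, ne_of_apply_ne g h.ne']

theorem Bool.toNat_not_eq_one_sub (b : Bool) : ((!b).toNat : ℤ) = 1 - b.toNat := by
  cases b <;> rfl

namespace TCP

def CdistDvd (m : ℕ) (p : TCP) : Prop :=
  ∀ B : Finset p.Point, p.IsBlock B → ∀ a ∈ B, ∀ b ∈ B, (m : ℤ) ∣ p.cdist a b

section Potential

variable (p : TCP)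

theorem pos_lt_size (x : p.Point) : p.pos x < p.size := by
  rcases x with j | i <;> simp only [pos, size] <;> omega

theorem pos_injective : Function.Injective p.pos := by
  rintro (j | i) (j' | i') h <;> simp only [pos] at h <;>
    first | omega | (simp only [Sum.inl.injEq, Sum.inr.injEq]; omega)

theorem lower_le_pos_inl (j : Fin p.upper) : p.lower ≤ p.pos (.inl j) := by
  simp only [pos]; omega

theorem pos_inr_lt (i : Fin p.lower) : p.pos (.inr i) < p.lower := i.isLt

theorem relpos_eq (x z : p.Point) :
    p.relpos x z =
      if p.pos x ≤ p.pos z then p.pos z - p.pos x else p.size + p.pos z - p.pos x := by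
  have hx := p.pos_lt_size x
  have hz := p.pos_lt_size z
  unfold relpos
  split_ifs with h
  · rw [show p.size + p.pos z - p.pos x = p.pos z - p.pos x + p.size by omega,
      Nat.add_mod_right, Nat.mod_eq_of_lt (by omega)]
  · exact Nat.mod_eq_of_lt (by omega)

def csumBefore (x : p.Point) : ℤ := ∑ z, if p.pos z < p.pos x then p.sgn z else 0

/-- The summand `[x is white]` makes `pot y - pot x` fit both cases of `cdist`
(`cdist_eq_of_ne`). -/
def pot (x : p.Point) : ℤ := p.csumBefore x + (p.ncolor x).toNat

theorem sgn_eq_two_mul_sub_one (x : p.Point) : p.sgn x = 2 * ((p.ncolor x).toNat : ℤ) - 1 := by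
  unfold sgn; cases p.ncolor x <;> rfl

theorem tsum_eq_sum_sgn : p.tsum = ∑ z, p.sgn z := rfl

theorem csum_Ioo_eq {x y : p.Point} (hxy : x ≠ y) :
    p.csum (p.Ioo x y) =
      p.csumBefore y - p.csumBefore x - p.sgn x + if p.pos x < p.pos y then 0 else p.tsum := by
  have hpos : p.pos x ≠ p.pos y := p.pos_injective.ne hxy
  have hx := p.pos_lt_size x
  have hy := p.pos_lt_size y
  have hwrap : (if p.pos x < p.pos y then 0 else p.tsum) =
      ∑ z, if p.pos x < p.pos y then 0 else p.sgn z := by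
    split_ifs <;> simp [tsum_eq_sum_sgn]
  rw [csum, Ioo, Finset.sum_filter, csumBefore, csumBefore, hwrap,
    ← Finset.sum_ite_eq_of_mem' Finset.univ x p.sgn (Finset.mem_univ x),
    ← Finset.sum_sub_distrib, ← Finset.sum_sub_distrib, ← Finset.sum_add_distrib]
  refine Finset.sum_congr rfl fun z _ => ?_
  have hz := p.pos_lt_size z
  simp only [relpos_eq, ← p.pos_injective.eq_iff (b := x)]
  split_ifs <;> omega

theorem csum_Ioc_eq_csum_Ioo_add {x y : p.Point} (hxy : x ≠ y) :
    p.csum (p.Ioc x y) = p.csum (p.Ioo x y) + p.sgn y := by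
  have hpos : p.pos x ≠ p.pos y := p.pos_injective.ne hxy
  have hx := p.pos_lt_size x
  have hy := p.pos_lt_size y
  rw [csum, csum, Ioc, Ioo, Finset.sum_filter, Finset.sum_filter,
    ← Finset.sum_ite_eq_of_mem' Finset.univ y p.sgn (Finset.mem_univ y),
    ← Finset.sum_add_distrib]
  refine Finset.sum_congr rfl fun z _ => ?_
  have hz := p.pos_lt_size z
  simp only [relpos_eq, ← p.pos_injective.eq_iff (b := y)]
  split_ifs <;> omega

theorem cdist_eq_of_ne {x y : p.Point} (hxy : x ≠ y) :
    p.cdist x y = p.pot y - p.pot x + if p.pos x < p.pos y then 0 else p.tsum := by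
  rw [cdist, if_neg hxy, pot, pot]
  by_cases hc : p.ncolor x = p.ncolor y
  · rw [if_pos hc, csum_Ioc_eq_csum_Ioo_add p hxy, csum_Ioo_eq p hxy, sgn_eq_two_mul_sub_one,
      sgn_eq_two_mul_sub_one, hc]
    ring
  · rw [if_neg hc, csum_Ioo_eq p hxy, sgn_eq_two_mul_sub_one, Bool.eq_not.2 (Ne.symm hc),
      Bool.toNat_not_eq_one_sub]
    ring

theorem cdist_modEq (x y : p.Point) : p.cdist x y ≡ p.pot y - p.pot x [ZMOD p.tsum] := by
  by_cases hxy : x = y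
  · subst hxy
    simp [cdist, Int.ModEq]
  · rw [cdist_eq_of_ne p hxy]
    split_ifs
    · rw [add_zero]
    · exact Int.add_modEq_right

theorem cdistDvd_iff {m : ℕ} :
    CdistDvd m p ↔ (m : ℤ) ∣ p.tsum ∧ ∀ x y, p.rel.r x y → p.pot x ≡ p.pot y [ZMOD m] := by
  have mem_blockOf {x y : p.Point} : y ∈ p.blockOf x ↔ p.rel.r x y := by simp [blockOf]
  constructor
  · intro H
    have hrel {x y} (h : p.rel.r x y) : (m : ℤ) ∣ p.cdist x y :=
      H _ ⟨x, rfl⟩ x (mem_blockOf.2 (p.rel.refl x)) y (mem_blockOf.2 h)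
    have htsum : (m : ℤ) ∣ p.tsum := by
      rcases isEmpty_or_nonempty p.Point with h | h
      · simp [tsum_eq_sum_sgn]
      · obtain ⟨x⟩ := h
        simpa [cdist] using hrel (p.rel.refl x)
    refine ⟨htsum, fun x y h => Int.modEq_iff_dvd.2 ?_⟩
    exact (((p.cdist_modEq x y).of_dvd htsum).dvd_iff).1 (hrel h)
  · rintro ⟨htsum, hpot⟩ B ⟨x, rfl⟩ a ha b hb
    have hab : p.rel.r a b := p.rel.trans (p.rel.symm (mem_blockOf.1 ha)) (mem_blockOf.1 hb)
    exact (((p.cdist_modEq a b).of_dvd htsum).dvd_iff).2 (Int.modEq_iff_dvd.1 (hpot a b hab))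

def lowerSum : ℤ := ∑ i, p.sgn (.inr i)

theorem tsum_eq_sum_upper_add_lowerSum : p.tsum = ∑ j, p.sgn (.inl j) + p.lowerSum :=
  Fintype.sum_sum_type p.sgn

theorem csumBefore_inr (i : Fin p.lower) :
    p.csumBefore (.inr i) =
      ∑ i' : Fin p.lower, if (i' : ℕ) < i then p.sgn (.inr i') else 0 := by
  rw [csumBefore, Fintype.sum_sum_type, Finset.sum_eq_zero, zero_add]
  · rfl
  · intro j _
    rw [if_neg (not_lt.2 ((p.pos_inr_lt i).le.trans (p.lower_le_pos_inl j)))]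

theorem csumBefore_inl (j : Fin p.upper) :
    p.csumBefore (.inl j) =
      p.lowerSum + ∑ j' : Fin p.upper, if (j : ℕ) < j' then p.sgn (.inl j') else 0 := by
  rw [csumBefore, Fintype.sum_sum_type, add_comm, lowerSum]
  refine congrArg₂ (· + ·) (Finset.sum_congr rfl fun i _ => ?_)
    (Finset.sum_congr rfl fun j' _ => if_congr ?_ rfl rfl)
  · exact if_pos ((p.pos_inr_lt i).trans_le (p.lower_le_pos_inl j))
  · simp only [pos]
    omega

end Potential

theorem cdistDvd_of_pot_eq {m : ℕ} {p : TCP} (htsum : p.tsum = 0) (k : ℤ)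
    (hpot : ∀ x, p.pot x = k) : CdistDvd m p :=
  (cdistDvd_iff p).2 ⟨htsum ▸ dvd_zero _, fun x y _ => by rw [hpot x, hpot y]⟩

theorem cdistDvd_emptyP (m : ℕ) : CdistDvd m emptyP := by
  rintro B ⟨(x | x), rfl⟩ <;> exact x.elim0

theorem cdistDvd_idPart (m : ℕ) (c : Bool) : CdistDvd m (idPart c) := by
  refine cdistDvd_of_pot_eq ?_ c.toNat ?_
  · cases c <;> simp [tsum_eq_sum_sgn, sgn, ncolor, idPart]
  · rintro (j | i)
    · simp only [pot, csumBefore_inl, lowerSum]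
      erw [Fin.sum_univ_one, Fin.sum_univ_one]
      cases c <;> fin_cases j <;> simp [sgn, ncolor, idPart]
    · simp only [pot, csumBefore_inr]
      erw [Fin.sum_univ_one]
      cases c <;> fin_cases i <;> simp [ncolor, idPart]

theorem cdistDvd_lpair (m : ℕ) (c : Bool) : CdistDvd m (lpair c !c) := by
  refine cdistDvd_of_pot_eq ?_ c.toNat ?_
  · rw [tsum_eq_sum_upper_add_lowerSum, lowerSum]
    erw [Fin.sum_univ_zero, Fin.sum_univ_two]
    cases c <;> simp [sgn, ncolor, lpair]
  · rintro (j | i)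
    · exact j.elim0
    · simp only [pot, csumBefore_inr]
      erw [Fin.sum_univ_two]
      cases c <;> fin_cases i <;> simp [sgn, ncolor, lpair]

section Tensor

variable (p q : TCP)

theorem tensor_ncolor_tinl (x : p.Point) : (p.tensor q).ncolor (tinl p q x) = p.ncolor x := by
  rcases x with j | i <;> simp [tinl, ncolor, tensor, finSumFinEquiv_symm_apply_castAdd]

theorem tensor_ncolor_tinr (y : q.Point) : (p.tensor q).ncolor (tinr p q y) = q.ncolor y := by
  rcases y with j | i <;> simp [tinr, ncolor, tensor, finSumFinEquiv_symm_apply_natAdd]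

theorem tensor_sgn_tinl (x : p.Point) : (p.tensor q).sgn (tinl p q x) = p.sgn x := by
  rw [sgn, tensor_ncolor_tinl, sgn]

theorem tensor_sgn_tinr (y : q.Point) : (p.tensor q).sgn (tinr p q y) = q.sgn y := by
  rw [sgn, tensor_ncolor_tinr, sgn]

theorem tensor_pos_tinl (x : p.Point) :
    (p.tensor q).pos (tinl p q x) = if p.lower ≤ p.pos x then p.pos x + q.size else p.pos x := by
  rcases x with j | i
  · rw [if_pos (p.lower_le_pos_inl j)]
    have := j.isLt
    simp only [tinl, pos, tensor, size, Fin.val_castAdd]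
    omega
  · rw [if_neg (p.pos_inr_lt i).not_ge]
    rfl

theorem tensor_pos_tinr (y : q.Point) :
    (p.tensor q).pos (tinr p q y) = p.lower + q.pos y := by
  rcases y with j | i
  · have := j.isLt
    simp only [tinr, pos, tensor, Fin.val_natAdd]
    omega
  · rfl

theorem sum_tensor {M : Type*} [AddCommMonoid M] (f : (p.tensor q).Point → M) :
    ∑ z, f z = ∑ x, f (tinl p q x) + ∑ y, f (tinr p q y) := by
  rw [Fintype.sum_sum_type]
  erw [Fin.sum_univ_add, Fin.sum_univ_add]
  simp only [Fintype.sum_sum_type]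
  rw [add_add_add_comm]
  rfl

theorem tensor_tsum : (p.tensor q).tsum = p.tsum + q.tsum := by
  simp only [tsum_eq_sum_sgn, sum_tensor, tensor_sgn_tinl, tensor_sgn_tinr]

theorem tensor_csumBefore_tinl (x : p.Point) :
    (p.tensor q).csumBefore (tinl p q x) =
      p.csumBefore x + if p.lower ≤ p.pos x then q.tsum else 0 := by
  have := q.pos_lt_size
  simp only [csumBefore, sum_tensor, tensor_pos_tinl, tensor_pos_tinr, tensor_sgn_tinl,
    tensor_sgn_tinr]
  congr 1
  · exact Finset.sum_congr rfl fun x' _ => if_congr (by split_ifs <;> omega) rfl rfl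
  · split_ifs with h
    · exact Finset.sum_congr rfl fun y _ => if_pos (by have := this y; omega)
    · exact Finset.sum_eq_zero fun y _ => if_neg (by omega)

theorem tensor_csumBefore_tinr (y : q.Point) :
    (p.tensor q).csumBefore (tinr p q y) =
      (∑ x, if p.pos x < p.lower then p.sgn x else 0) + q.csumBefore y := by
  have := q.pos_lt_size y
  simp only [csumBefore, sum_tensor, tensor_pos_tinl, tensor_pos_tinr, tensor_sgn_tinl,
    tensor_sgn_tinr]
  congr 1
  · exact Finset.sum_congr rfl fun x' _ => if_congr (by split_ifs <;> omega) rfl rfl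
  · exact Finset.sum_congr rfl fun y' _ => if_congr (by omega) rfl rfl

theorem ptmap_tinl (x : p.Point) : ptmap p q (tinl p q x) = .inl x := by
  rcases x with j | i <;> simp [tinl, ptmap]

theorem ptmap_tinr (y : q.Point) : ptmap p q (tinr p q y) = .inr y := by
  rcases y with j | i <;> simp [tinr, ptmap]

theorem tensor_rel_iff (a b : p.Point ⊕ q.Point) :
    (p.tensor q).rel.r (a.elim (tinl p q) (tinr p q)) (b.elim (tinl p q) (tinr p q)) ↔
      sumRel p.rel.r q.rel.r a b := by
  have hptmap (w : p.Point ⊕ q.Point) : ptmap p q (w.elim (tinl p q) (tinr p q)) = w := by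
    rcases w with x | y
    exacts [ptmap_tinl p q x, ptmap_tinr p q y]
  exact Iff.of_eq (congrArg₂ (sumRel p.rel.r q.rel.r) (hptmap a) (hptmap b))

theorem exists_tensor_eq_elim (z : (p.tensor q).Point) :
    ∃ w : p.Point ⊕ q.Point, w.elim (tinl p q) (tinr p q) = z := by
  rcases z with k | k <;> induction k using Fin.addCases
  · exact ⟨.inl (.inl _), rfl⟩
  · exact ⟨.inr (.inl _), rfl⟩
  · exact ⟨.inl (.inr _), rfl⟩
  · exact ⟨.inr (.inr _), rfl⟩

theorem tensor_pot_tinl (x : p.Point) :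
    (p.tensor q).pot (tinl p q x) = p.pot x + if p.lower ≤ p.pos x then q.tsum else 0 := by
  rw [pot, pot, tensor_csumBefore_tinl, tensor_ncolor_tinl]
  ring

theorem tensor_pot_tinr (y : q.Point) :
    (p.tensor q).pot (tinr p q y) =
      q.pot y + ∑ x, if p.pos x < p.lower then p.sgn x else 0 := by
  rw [pot, pot, tensor_csumBefore_tinr, tensor_ncolor_tinr]
  ring

end Tensor

theorem CdistDvd.tensor {m : ℕ} {p q : TCP} (hp : CdistDvd m p) (hq : CdistDvd m q) :
    CdistDvd m (p.tensor q) := by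
  rw [cdistDvd_iff] at hp hq ⊢
  refine ⟨tensor_tsum p q ▸ dvd_add hp.1 hq.1, fun z z' h => ?_⟩
  obtain ⟨a, rfl⟩ := exists_tensor_eq_elim p q z
  obtain ⟨b, rfl⟩ := exists_tensor_eq_elim p q z'
  rw [tensor_rel_iff] at h
  have hshift (x : p.Point) : (if p.lower ≤ p.pos x then q.tsum else 0) ≡ 0 [ZMOD m] := by
    split_ifs
    exacts [Int.modEq_zero_iff_dvd.2 hq.1, rfl]
  rcases a with x | y <;> rcases b with x' | y' <;> simp only [sumRel] at h
  · rw [Sum.elim_inl, Sum.elim_inl, tensor_pot_tinl, tensor_pot_tinl]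
    exact (hp.2 x x' h).add ((hshift x).trans (hshift x').symm)
  · rw [Sum.elim_inr, Sum.elim_inr, tensor_pot_tinr, tensor_pot_tinr]
    exact (hq.2 y y' h).add_right _

section Involution

variable (p : TCP)

def involEquiv : p.Point ≃ p.invol.Point := Equiv.sumComm _ _

theorem invol_ncolor (x : p.Point) : p.invol.ncolor (p.involEquiv x) = !p.ncolor x := by
  rcases x with j | i
  · exact (Bool.not_not _).symm
  · rfl

theorem invol_sgn (x : p.Point) : p.invol.sgn (p.involEquiv x) = -p.sgn x := by
  simp only [sgn, invol_ncolor]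
  cases p.ncolor x <;> rfl

theorem invol_pos_add_pos (x : p.Point) : p.invol.pos (p.involEquiv x) + p.pos x + 1 = p.size := by
  rcases x with j | i
  · have : (j : ℕ) < p.upper := j.isLt
    change j + (p.lower + (p.upper - 1 - j)) + 1 = p.upper + p.lower
    omega
  · have : (i : ℕ) < p.lower := i.isLt
    change p.upper + (p.lower - 1 - i) + i + 1 = p.upper + p.lower
    omega

theorem invol_rel_iff (x y : p.Point) :
    p.invol.rel.r (p.involEquiv x) (p.involEquiv y) ↔ p.rel.r x y := by
  change p.rel.r (Sum.swap (Sum.swap x)) (Sum.swap (Sum.swap y)) ↔ _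
  rw [Sum.swap_swap, Sum.swap_swap]

theorem invol_tsum : p.invol.tsum = -p.tsum := by
  rw [tsum_eq_sum_sgn, tsum_eq_sum_sgn, ← Finset.sum_neg_distrib]
  exact (Fintype.sum_equiv p.involEquiv _ _ fun x => (p.invol_sgn x).symm).symm

theorem invol_csumBefore (x : p.Point) :
    p.invol.csumBefore (p.involEquiv x) = p.csumBefore x + p.sgn x - p.tsum := by
  have hsplit : p.tsum = p.csumBefore x + p.sgn x +
      ∑ w, if p.pos x < p.pos w then p.sgn w else 0 :=
    sum_eq_sum_lt_add_add_sum_gt p.pos_injective p.sgn x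
  have hafter : p.invol.csumBefore (p.involEquiv x) =
      -∑ w, if p.pos x < p.pos w then p.sgn w else 0 := by
    rw [csumBefore, ← Finset.sum_neg_distrib]
    refine (Fintype.sum_equiv p.involEquiv _ _ fun w => ?_).symm
    have := p.invol_pos_add_pos x
    have := p.invol_pos_add_pos w
    rw [invol_sgn]
    split_ifs <;> omega
  rw [hafter, hsplit]
  ring

theorem invol_pot (x : p.Point) : p.invol.pot (p.involEquiv x) = p.pot x - p.tsum := by
  rw [pot, pot, invol_csumBefore, invol_ncolor, sgn_eq_two_mul_sub_one,
    Bool.toNat_not_eq_one_sub]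
  ring

end Involution

theorem CdistDvd.invol {m : ℕ} {p : TCP} (hp : CdistDvd m p) : CdistDvd m p.invol := by
  rw [cdistDvd_iff] at hp ⊢
  refine ⟨p.invol_tsum ▸ hp.1.neg_right, fun z z' h => ?_⟩
  obtain ⟨x, rfl⟩ := p.involEquiv.surjective z
  obtain ⟨y, rfl⟩ := p.involEquiv.surjective z'
  rw [invol_pot, invol_pot]
  exact (hp.2 x y ((p.invol_rel_iff x y).1 h)).sub_right _

theorem Composable.sgn_inl {p q : TCP} (hc : Composable p q) (j : Fin p.upper) :
    p.sgn (.inl j) = -q.sgn (.inr (Fin.cast hc.len j)) := by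
  simp only [sgn, ncolor, hc.col j]
  by_cases h : q.loColor (Fin.cast hc.len j) <;> simp [h]

theorem Composable.sum_sgn_upper {p q : TCP} (hc : Composable p q) :
    ∑ j, p.sgn (.inl j) = -q.lowerSum := by
  rw [lowerSum, ← Finset.sum_neg_distrib]
  exact Fintype.sum_equiv (finCongr hc.len) _ _ hc.sgn_inl

theorem Composable.pot_inl {p q : TCP} (hc : Composable p q) (j : Fin p.upper) :
    p.pot (.inl j) = q.pot (.inr (Fin.cast hc.len j)) + (p.lowerSum - q.lowerSum) := by
  set i := Fin.cast hc.len j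
  have hsplit : q.lowerSum = q.csumBefore (.inr i) + q.sgn (.inr i) +
      ∑ i' : Fin q.lower, if (i : ℕ) < i' then q.sgn (.inr i') else 0 := by
    rw [csumBefore_inr]
    exact sum_eq_sum_lt_add_add_sum_gt Fin.val_injective _ i
  have hafter : (∑ j' : Fin p.upper, if (j : ℕ) < j' then p.sgn (.inl j') else 0) =
      -∑ i' : Fin q.lower, if (i : ℕ) < i' then q.sgn (.inr i') else 0 := by
    rw [← Finset.sum_neg_distrib]
    refine Fintype.sum_equiv (finCongr hc.len) _ _ fun j' => ?_
    rw [hc.sgn_inl j']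
    simp only [finCongr_apply, Fin.val_cast, i]
    split_ifs <;> simp
  have hcolor : p.ncolor (.inl j) = !q.ncolor (.inr i) := by
    simp only [ncolor, hc.col j, i]
  rw [pot, pot, csumBefore_inl, hafter, hcolor, hsplit, sgn_eq_two_mul_sub_one,
    Bool.toNat_not_eq_one_sub]
  ring

section Composition

variable (p q : TCP) (hc : Composable p q)

theorem comp_pot_inl (j : Fin (comp p q hc).upper) :
    (comp p q hc).pot (.inl j) = q.pot (.inl j) + (p.lowerSum - q.lowerSum) := by
  rw [pot, pot, csumBefore_inl, csumBefore_inl q j]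
  change p.lowerSum + (∑ j' : Fin q.upper, if (j : ℕ) < j' then q.sgn (.inl j') else 0) +
    (q.ncolor (.inl j)).toNat = _
  ring

theorem comp_pot_inr (i : Fin (comp p q hc).lower) :
    (comp p q hc).pot (.inr i) = p.pot (.inr i) := by
  rw [pot, pot, csumBefore_inr, csumBefore_inr p i]
  rfl

theorem comp_tsum : (comp p q hc).tsum = p.tsum + q.tsum := by
  rw [(comp p q hc).tsum_eq_sum_upper_add_lowerSum, p.tsum_eq_sum_upper_add_lowerSum,
    q.tsum_eq_sum_upper_add_lowerSum, hc.sum_sgn_upper]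
  change ∑ j, q.sgn (.inl j) + p.lowerSum = _
  ring

/-- The shift by `p.lowerSum - q.lowerSum` makes glued middle points agree
(`Composable.pot_inl`). -/
def compPot : q.Point ⊕ p.Point → ℤ :=
  Sum.elim (fun y => q.pot y + (p.lowerSum - q.lowerSum)) p.pot

theorem compPot_modEq_of_eqvGen {m : ℕ}
    (hp : ∀ x y, p.rel.r x y → p.pot x ≡ p.pot y [ZMOD m])
    (hq : ∀ x y, q.rel.r x y → q.pot x ≡ q.pot y [ZMOD m]) {u v : q.Point ⊕ p.Point}
    (h : Relation.EqvGen (compRel p q hc.len) u v) :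
    compPot p q u ≡ compPot p q v [ZMOD m] := by
  refine Setoid.eqvGen_le (s := Setoid.ker fun w => compPot p q w % m) ?_ h
  rintro _ _ (⟨a, b, rfl, rfl, hab⟩ | ⟨a, b, rfl, rfl, hab⟩ | ⟨j, rfl, rfl⟩ |
    ⟨j, rfl, rfl⟩)
  · exact (hq a b hab).add_right _
  · exact hp a b hab
  · exact (congrArg (· % (m : ℤ)) (hc.pot_inl j)).symm
  · exact congrArg (· % (m : ℤ)) (hc.pot_inl j)

end Composition

theorem CdistDvd.comp {m : ℕ} {p q : TCP} (hc : Composable p q) (hp : CdistDvd m p)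
    (hq : CdistDvd m q) : CdistDvd m (comp p q hc) := by
  rw [cdistDvd_iff] at hp hq ⊢
  refine ⟨comp_tsum p q hc ▸ dvd_add hp.1 hq.1, ?_⟩
  rintro (j | i) (j' | i') h <;>
    simpa only [comp_pot_inl, comp_pot_inr, compPot, Sum.elim_inl, Sum.elim_inr] using
      compPot_modEq_of_eqvGen p q hc hp.2 hq.2 h

end TCP

/-- partitions whose same-block color distances are multiples of m
form a category. -/
theorem stmt14 (m : ℕ) :
    TCP.IsCategory {p : TCP | ∀ B : Finset p.Point, p.IsBlock B →
      ∀ a ∈ B, ∀ b ∈ B, (m : ℤ) ∣ p.cdist a b} :=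
  ⟨TCP.cdistDvd_emptyP m, TCP.cdistDvd_idPart m true, TCP.cdistDvd_idPart m false,
    TCP.cdistDvd_lpair m true, TCP.cdistDvd_lpair m false,
    fun _ _ hp hq => TCP.CdistDvd.tensor hp hq, fun _ hp => TCP.CdistDvd.invol hp,
    fun _ _ hc hp hq => TCP.CdistDvd.comp hc hp hq⟩
end
end

section
/- For every g ∈ {0} ∪ ℕ, the set { p ∈ P°• | every block of p has color sum in gℤ } is a category of two-colored partitions. -/
noncomputable section
attribute [local instance] Classical.propDecidable

/-
Color sums are additive over disjoint sets of points. Tensor products only relabel blocks,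
the involution relabels them while negating every color sum, and each generator has a single
block of color sum 0. A block of a composition is glued from blocks of the two factors along
the middle row, where each glued pair of points has opposite normalized colors; so its color
sum is the sum of the color sums of a union of blocks of the factors.
-/

open Finset

theorem Setoid.dvd_sum_filter_of_saturated {α R : Type*} [Fintype α] [NonUnitalSemiring R]
    (r : Setoid α) (f : α → R) {g : R} (hclass : ∀ x, g ∣ ∑ y with r x y, f y)
    {P : α → Prop} [DecidablePred P] (hP : ∀ x y, r x y → P x → P y) :
    g ∣ ∑ x with P x, f x := by
  rw [← sum_fiberwise_of_maps_to (fun x hx => mem_image_of_mem (Quotient.mk r) hx)]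
  refine dvd_sum fun c hc => ?_
  obtain ⟨x, hx, rfl⟩ := mem_image.1 hc
  convert hclass x using 2
  ext y
  simp only [mem_filter, mem_univ, true_and, Quotient.eq] at hx ⊢
  exact ⟨fun h => r.symm h.2, fun h => ⟨hP x y h hx, r.symm h⟩⟩

namespace TCP

theorem blockOf_eq_univ_of_rel_eq_top {p : TCP} (h : p.rel = ⊤) (x : p.Point) :
    p.blockOf x = univ := by
  ext y
  simp only [blockOf, mem_filter, mem_univ, true_and, iff_true]
  rw [h, Setoid.top_def]
  trivial

theorem csum_blockOf_idPart (c : Bool) (x : (idPart c).Point) :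
    (idPart c).csum ((idPart c).blockOf x) = 0 := by
  rw [blockOf_eq_univ_of_rel_eq_top rfl]
  cases c <;> decide

theorem csum_blockOf_lpair_not (c : Bool) (x : (lpair c !c).Point) :
    (lpair c !c).csum ((lpair c !c).blockOf x) = 0 := by
  rw [blockOf_eq_univ_of_rel_eq_top rfl]
  cases c <;> decide

def ptEquiv (p q : TCP) : (p.tensor q).Point ≃ p.Point ⊕ q.Point where
  toFun := ptmap p q
  invFun := Sum.elim (tinl p q) (tinr p q)
  left_inv := by
    rintro (j | j) <;> induction j using Fin.addCases <;> simp [ptmap, tinl, tinr]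
  right_inv := by
    rintro ((j | j) | (j | j)) <;> simp [ptmap, tinl, tinr]

theorem sgn_tensor (p q : TCP) (y : (p.tensor q).Point) :
    (p.tensor q).sgn y = Sum.elim p.sgn q.sgn (ptmap p q y) := by
  rcases y with j | j <;> induction j using Fin.addCases <;>
    simp [sgn, ncolor, tensor, ptmap] <;> rfl

theorem sum_filter_sumRel_inl {α β M : Type*} [Fintype α] [Fintype β] [AddCommMonoid M]
    (s : Setoid α) (t : Setoid β) (f : α → M) (g : β → M) (a : α) :
    ∑ z with sumRel s t (.inl a) z, Sum.elim f g z = ∑ y with s a y, f y := by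
  rw [sum_filter, sum_filter, Fintype.sum_sum_type]
  simp only [sumRel, Sum.elim_inl, ↓reduceIte, sum_const_zero, add_zero]
  rfl

theorem sum_filter_sumRel_inr {α β M : Type*} [Fintype α] [Fintype β] [AddCommMonoid M]
    (s : Setoid α) (t : Setoid β) (f : α → M) (g : β → M) (b : β) :
    ∑ z with sumRel s t (.inr b) z, Sum.elim f g z = ∑ y with t b y, g y := by
  rw [sum_filter, sum_filter, Fintype.sum_sum_type]
  simp only [sumRel, Sum.elim_inr, ↓reduceIte, sum_const_zero, zero_add]
  rfl

theorem csum_blockOf_tensor (p q : TCP) (x : (p.tensor q).Point) :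
    (p.tensor q).csum ((p.tensor q).blockOf x) =
      Sum.elim (fun u => p.csum (p.blockOf u)) (fun v => q.csum (q.blockOf v)) (ptmap p q x) := by
  calc (p.tensor q).csum ((p.tensor q).blockOf x)
      = ∑ z with sumRel p.rel q.rel (ptmap p q x) z, Sum.elim p.sgn q.sgn z :=
        sum_equiv (ptEquiv p q)
          (fun _ => by simp only [blockOf, mem_filter, mem_univ, true_and]; rfl)
          (fun y _ => sgn_tensor p q y)
    _ = _ := by
      rcases ptmap p q x with u | v
      exacts [sum_filter_sumRel_inl .., sum_filter_sumRel_inr ..]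

theorem sgn_invol (p : TCP) (y : p.invol.Point) : p.invol.sgn y = -p.sgn y.swap := by
  rcases y with j | i
  · show (if !p.loColor j then (1 : ℤ) else -1) = -if p.loColor j then 1 else -1
    cases p.loColor j <;> rfl
  · show (if p.upColor i then (1 : ℤ) else -1) = -if !p.upColor i then 1 else -1
    cases p.upColor i <;> rfl

theorem csum_blockOf_invol (p : TCP) (x : p.invol.Point) :
    p.invol.csum (p.invol.blockOf x) = -p.csum (p.blockOf x.swap) := by
  rw [csum, csum, ← sum_neg_distrib]
  exact sum_equiv (Equiv.sumComm _ _)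
    (fun _ => by simp only [blockOf, mem_filter, mem_univ, true_and]; rfl)
    (fun y _ => sgn_invol p y)

section Composition

variable {p q : TCP} (h : Composable p q)

open Relation

def compIncl (p q : TCP) : Fin q.upper ⊕ Fin p.lower → q.Point ⊕ p.Point :=
  Sum.map Sum.inl Sum.inr

theorem comp_rel_iff (x y : (comp p q h).Point) :
    (comp p q h).rel x y ↔ EqvGen (compRel p q h.len) (compIncl p q x) (compIncl p q y) := by
  rcases x with _ | _ <;> rcases y with _ | _ <;> rfl

theorem sum_middle_sgn_eq_zero (z₀ : q.Point ⊕ p.Point) :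
    ∑ i : Fin q.lower,
        (if EqvGen (compRel p q h.len) z₀ (.inl (.inr i)) then q.sgn (.inr i) else 0)
      + ∑ j : Fin p.upper,
          (if EqvGen (compRel p q h.len) z₀ (.inr (.inl j)) then p.sgn (.inl j) else 0) = 0 := by
  have hmem (j : Fin p.upper) : EqvGen (compRel p q h.len) z₀ (.inr (.inl j)) ↔
      EqvGen (compRel p q h.len) z₀ (.inl (.inr (Fin.cast h.len j))) := by
    have hR : EqvGen (compRel p q h.len) (.inl (.inr (Fin.cast h.len j))) (.inr (.inl j)) :=
      .rel _ _ (Or.inr (Or.inr (Or.inl ⟨j, rfl, rfl⟩)))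
    exact ⟨fun e => e.trans _ _ _ hR.symm, fun e => e.trans _ _ _ hR⟩
  have hsgn (j : Fin p.upper) : p.sgn (.inl j) = -q.sgn (.inr (Fin.cast h.len j)) := by
    cases hc : q.loColor (Fin.cast h.len j) <;> simp [sgn, ncolor, h.col j, hc]
  rw [← Equiv.sum_comp (finCongr h.len), ← sum_add_distrib]
  refine sum_eq_zero fun j _ => ?_
  rw [finCongr_apply, hmem, hsgn]
  split_ifs <;> simp

theorem csum_blockOf_comp (x : (comp p q h).Point) :
    (comp p q h).csum ((comp p q h).blockOf x) =
      ∑ z with EqvGen (compRel p q h.len) (compIncl p q x) (.inl z), q.sgn z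
        + ∑ z with EqvGen (compRel p q h.len) (compIncl p q x) (.inr z), p.sgn z := by
  set E := EqvGen (compRel p q h.len) (compIncl p q x)
  have hblock : (comp p q h).csum ((comp p q h).blockOf x) =
      ∑ j : Fin q.upper, (if E (.inl (.inl j)) then q.sgn (.inl j) else 0)
        + ∑ i : Fin p.lower, (if E (.inr (.inr i)) then p.sgn (.inr i) else 0) := by
    simp only [csum, blockOf, sum_filter, Fintype.sum_sum_type, comp_rel_iff]
    rfl
  rw [hblock, sum_filter, sum_filter, Fintype.sum_sum_type, Fintype.sum_sum_type]
  linear_combination -sum_middle_sgn_eq_zero h (compIncl p q x)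

theorem eqvGen_compRel_inl_of_rel {z₀ : q.Point ⊕ p.Point} {a b : q.Point}
    (hab : q.rel a b) (ha : EqvGen (compRel p q h.len) z₀ (.inl a)) :
    EqvGen (compRel p q h.len) z₀ (.inl b) :=
  ha.trans _ _ _ (.rel _ _ (Or.inl ⟨a, b, rfl, rfl, hab⟩))

theorem eqvGen_compRel_inr_of_rel {z₀ : q.Point ⊕ p.Point} {a b : p.Point}
    (hab : p.rel a b) (ha : EqvGen (compRel p q h.len) z₀ (.inr a)) :
    EqvGen (compRel p q h.len) z₀ (.inr b) :=
  ha.trans _ _ _ (.rel _ _ (Or.inr (Or.inl ⟨a, b, rfl, rfl, hab⟩)))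

end Composition

end TCP

/-- partitions all of whose blocks have color sum in gℤ form a category. -/
theorem stmt17 (g : ℕ) :
    TCP.IsCategory {p : TCP | ∀ B : Finset p.Point, p.IsBlock B →
      (g : ℤ) ∣ p.csum B} := by
  have mem_iff {p : TCP} : (∀ B : Finset p.Point, p.IsBlock B → (g : ℤ) ∣ p.csum B) ↔
      ∀ x, (g : ℤ) ∣ p.csum (p.blockOf x) :=
    ⟨fun hp x => hp _ ⟨x, rfl⟩, by rintro hp B ⟨x, rfl⟩; exact hp x⟩
  simp only [TCP.IsCategory, mem_iff]
  refine ⟨?_, ?_, ?_, ?_, ?_, ?_, ?_, ?_⟩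
  · rintro (j | j) <;> exact j.elim0
  · exact fun x => (TCP.csum_blockOf_idPart true x).symm ▸ dvd_zero _
  · exact fun x => (TCP.csum_blockOf_idPart false x).symm ▸ dvd_zero _
  · exact fun x => (TCP.csum_blockOf_lpair_not true x).symm ▸ dvd_zero _
  · exact fun x => (TCP.csum_blockOf_lpair_not false x).symm ▸ dvd_zero _
  · intro p q hp hq x
    rw [TCP.csum_blockOf_tensor]
    rcases TCP.ptmap p q x with u | v
    exacts [hp u, hq v]
  · intro p hp x
    rw [TCP.csum_blockOf_invol]
    exact (hp _).neg_right
  · intro p q h hp hq x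
    rw [TCP.csum_blockOf_comp]
    exact dvd_add
      (Setoid.dvd_sum_filter_of_saturated q.rel q.sgn hq fun _ _ =>
        TCP.eqvGen_compRel_inl_of_rel h)
      (Setoid.dvd_sum_filter_of_saturated p.rel p.sgn hp fun _ _ =>
        TCP.eqvGen_compRel_inr_of_rel h)
end
end
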